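/- Let N ≥ 1, ε > 0, K = ε·(J − I) with J the N×N all-ones complex matrix, and let x₀ ∈ ℂ^N have nonzero mean c = (1/N)∑_j (x₀)_j ≠ 0. Let x(t) = exp(tK)·x₀ and define the order parameter R(t) = (1/N)·|∑_j x_j(t)/|x_j(t)||, which is well defined for all sufficiently large t since each x_j(t) is eventually nonzero. Then R(t) → 1 as t → +∞. -/

import Mathlib

/-!
On the constant vector `c • 𝟙` the matrix `J - 1` acts by `N - 1`, and on the zero-mean deviation
`x₀ - c • 𝟙` by `-1`; hence `x(t) = e^{tε(N-1)} (c • 𝟙 + e^{-tεN} (x₀ - c • 𝟙))`. The positive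
factor `e^{tε(N-1)}` does not change the phases, and the bracket tends to `c • 𝟙` with `c ≠ 0`.
The order parameter is continuous at vectors with nonzero entries and equals `1` at a nonzero
constant vector.
-/

open NormedSpace Filter Topology
open scoped Matrix

namespace Matrix

theorem exp_mulVec_of_mulVec_eq_smul {m 𝕂 : Type*} [Fintype m] [DecidableEq m] [RCLike 𝕂]
    {A : Matrix m m 𝕂} {v : m → 𝕂} {μ : 𝕂} (h : A *ᵥ v = μ • v) :
    exp A *ᵥ v = exp μ • v := by
  let : NormedRing (Matrix m m 𝕂) := Matrix.linftyOpNormedRing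
  let : NormedAlgebra 𝕂 (Matrix m m 𝕂) := Matrix.linftyOpNormedAlgebra
  have hpow (k : ℕ) : A ^ k *ᵥ v = μ ^ k • v := by
    induction k with
    | zero => simp
    | succ k ih => rw [pow_succ', ← mulVec_mulVec, ih, mulVec_smul, h, smul_smul, pow_succ]
  -- The exponential series needs completeness for the `linfty` uniformity, which instance search
  -- does not identify with the product uniformity of `Matrix m m 𝕂` when `𝕂` is abstract.
  have hA := (@exp_series_hasSum_exp' 𝕂 _ _ _ _ _ _ (FiniteDimensional.complete 𝕂 _) A).map
    (mulVec.addMonoidHomLeft v) (continuous_id.matrix_mulVec continuous_const)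
  refine hA.unique ?_
  convert (exp_series_hasSum_exp' (𝕂 := 𝕂) μ).smul_const v using 2 with k
  change _ *ᵥ v = _
  rw [smul_mulVec, hpow, smul_smul, smul_eq_mul]

variable {ι : Type*} [Fintype ι] [DecidableEq ι] {J : Matrix ι ι ℂ}

theorem sub_one_mulVec_of_forall_eq_one (hJ : ∀ i j, J i j = 1) (v : ι → ℂ) :
    (J - 1) *ᵥ v = fun j => ∑ k, v k - v j := by
  ext j
  rw [sub_mulVec, one_mulVec]
  simp [mulVec, dotProduct, hJ]

theorem exp_smul_sub_one_mulVec_apply_of_forall_eq_one (hJ : ∀ i j, J i j = 1) (s c : ℂ)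
    {x₀ : ι → ℂ} (hx₀ : ∑ j, x₀ j = Fintype.card ι * c) (j : ι) :
    (exp (s • (J - 1)) *ᵥ x₀) j = Complex.exp (s * (Fintype.card ι - 1)) *
      (c + Complex.exp (-(s * Fintype.card ι)) * (x₀ j - c)) := by
  have hmean : (s • (J - 1)) *ᵥ (fun _ => c) = (s * (Fintype.card ι - 1)) • fun _ => c := by
    ext
    simp only [smul_mulVec, sub_one_mulVec_of_forall_eq_one hJ, Finset.sum_const,
      Finset.card_univ, nsmul_eq_mul, Pi.smul_apply, smul_eq_mul]
    ring
  have hdev : (s • (J - 1)) *ᵥ (x₀ - fun _ => c) = (-s) • (x₀ - fun _ => c) := by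
    ext
    simp only [smul_mulVec, sub_one_mulVec_of_forall_eq_one hJ, Pi.sub_apply,
      Finset.sum_sub_distrib, hx₀, Finset.sum_const, Finset.card_univ, nsmul_eq_mul, sub_self,
      Pi.smul_apply, smul_eq_mul]
    ring
  have hsplit : x₀ = (fun _ => c) + (x₀ - fun _ => c) := by abel
  rw [hsplit, mulVec_add, exp_mulVec_of_mulVec_eq_smul hmean, exp_mulVec_of_mulVec_eq_smul hdev]
  simp only [Pi.add_apply, Pi.smul_apply, Pi.sub_apply, smul_eq_mul, ← Complex.exp_eq_exp_ℂ]
  rw [mul_add, ← mul_assoc, ← Complex.exp_add]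
  ring_nf

end Matrix

section OrderParameter

variable {ι : Type*} [Fintype ι]

noncomputable def orderParameter (z : ι → ℂ) : ℝ :=
  1 / (Fintype.card ι : ℝ) * ‖∑ j, z j / (‖z j‖ : ℂ)‖

theorem orderParameter_ofReal_mul {r : ℝ} (hr : 0 < r) (z : ι → ℂ) :
    orderParameter (fun j => (r : ℂ) * z j) = orderParameter z := by
  have hr' : (r : ℂ) ≠ 0 := Complex.ofReal_ne_zero.2 hr.ne'
  simp only [orderParameter, norm_mul, Complex.norm_real, Real.norm_of_nonneg hr.le,
    Complex.ofReal_mul, mul_div_mul_left _ _ hr']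

theorem orderParameter_const [Nonempty ι] {c : ℂ} (hc : c ≠ 0) :
    orderParameter (fun _ : ι => c) = 1 := by
  have hcard : (Fintype.card ι : ℝ) ≠ 0 := Nat.cast_ne_zero.2 Fintype.card_ne_zero
  simp [orderParameter, hc, hcard]

theorem continuousAt_orderParameter {z : ι → ℂ} (hz : ∀ j, z j ≠ 0) :
    ContinuousAt orderParameter z := by
  unfold orderParameter
  fun_prop (disch := simpa using hz _)

theorem tendsto_orderParameter_one [Nonempty ι] {α : Type*} {l : Filter α} {z : α → ι → ℂ}
    {c : ℂ} (hc : c ≠ 0) (hz : ∀ j, Tendsto (fun a => z a j) l (𝓝 c)) :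
    Tendsto (fun a => orderParameter (z a)) l (𝓝 1) := by
  rw [← orderParameter_const (ι := ι) hc]
  exact (continuousAt_orderParameter fun _ => hc).tendsto.comp (tendsto_pi_nhds.2 hz)

end OrderParameter

theorem tendsto_add_exp_neg_mul_smul_atTop {E : Type*} [NormedAddCommGroup E] [NormedSpace ℝ E]
    {a : ℝ} (ha : 0 < a) (c u : E) :
    Tendsto (fun t : ℝ => c + Real.exp (-(t * a)) • u) atTop (𝓝 c) := by
  have hdecay : Tendsto (fun t : ℝ => Real.exp (-(t * a))) atTop (𝓝 0) :=
    Real.tendsto_exp_comp_nhds_zero.2 <| tendsto_neg_atTop_atBot.comp <|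
      tendsto_id.atTop_mul_const ha
  simpa using (hdecay.smul_const u).const_add c

/-- Complete graph, attractive coupling, nonzero mean: each `x_j(t)` is eventually nonzero,
and the Kuramoto order parameter `R(t) = (1/N)|∑_j x_j(t)/|x_j(t)||` tends to `1`
as `t → +∞`: complete phase synchronization. -/
theorem complete_graph_order_parameter_tendsto_one
    (N : ℕ) (hN : 1 ≤ N) (ε : ℝ) (hε : 0 < ε)
    (J : Matrix (Fin N) (Fin N) ℂ) (hJ : ∀ i j, J i j = 1)
    (K : Matrix (Fin N) (Fin N) ℂ) (hK : K = (ε : ℂ) • (J - 1))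
    (x₀ : Fin N → ℂ) (c : ℂ) (hc : c = (1 / (N : ℂ)) * ∑ j : Fin N, x₀ j) (hc0 : c ≠ 0)
    (x : ℝ → Fin N → ℂ) (hx : ∀ t, x t = (exp (t • K)).mulVec x₀)
    (R : ℝ → ℝ)
    (hR : ∀ t, R t = (1 / (N : ℝ)) *
      ‖∑ j : Fin N, x t j / (‖x t j‖ : ℂ)‖) :
    (∀ᶠ t in atTop, ∀ j : Fin N, x t j ≠ 0) ∧
    Tendsto R atTop (nhds 1) := by
  have : Nonempty (Fin N) := ⟨⟨0, hN⟩⟩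
  have hsum : ∑ j, x₀ j = Fintype.card (Fin N) * c := by
    have hN0 : (N : ℂ) ≠ 0 := Nat.cast_ne_zero.2 (by omega)
    rw [hc, Fintype.card_fin]
    field_simp
  set z : ℝ → Fin N → ℂ := fun t j => c + Real.exp (-(t * (ε * N))) • (x₀ j - c)
  have hxz (t : ℝ) : x t = fun j => (Real.exp (t * ε * (N - 1)) : ℂ) * z t j := by
    have htK : t • K = ((t * ε : ℝ) : ℂ) • (J - 1) := by
      rw [hK, ← smul_assoc, Complex.real_smul, Complex.ofReal_mul]
    ext j
    rw [hx, htK, Matrix.exp_smul_sub_one_mulVec_apply_of_forall_eq_one hJ _ c hsum]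
    simp [z, Complex.real_smul, Complex.ofReal_exp, mul_assoc]
  have hz (j : Fin N) : Tendsto (fun t => z t j) atTop (𝓝 c) :=
    tendsto_add_exp_neg_mul_smul_atTop (by positivity) c (x₀ j - c)
  have hRz : R = fun t => orderParameter (z t) := by
    ext t
    have hRx : R t = orderParameter (x t) := by rw [hR, orderParameter, Fintype.card_fin]
    rw [hRx, hxz, orderParameter_ofReal_mul (Real.exp_pos _)]
  refine ⟨?_, hRz ▸ tendsto_orderParameter_one hc0 hz⟩
  filter_upwards [eventually_all.2 fun j => (hz j).eventually_ne hc0] with t ht j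
  rw [hxz]
  exact mul_ne_zero (Complex.ofReal_ne_zero.2 (Real.exp_pos _).ne') (ht j)
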